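/- arXiv:1006.3447 — 3 statements merged into one kernel-verified Lean document; each statement's English description precedes it below -/
import Mathlib

section
/- Circular moves are compatible with switching: if σ is a permutation of Z/nZ and μ(i) = s + σ(i + t) for fixed s, t ∈ Z/nZ (where the comparison order on Z/nZ is fixed by identifying with {0,…,n−1}), then the linking matrices x_{i,j} = sign((i−j)(σ(i)−σ(j))) and y_{i,j} = sign((i−j)(μ(i)−μ(j))) of σ and μ are switching-equivalent, i.e., Y = D Pᵀ X P D for some permutation matrix P and diagonal ±1 matrix D. -/
/-!
Translation by `c` on `Fin n` preserves the order of `a` and `b` unless exactly one of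
`a + c`, `b + c` wraps around past `n`, so the sign of `a - b` changes by the factor
`wrapSign a c * wrapSign b c`. Applying this to the index shift `i ↦ i + t` and to the
value shift `x ↦ x + s`, the linking matrices satisfy `y i j = d i * x (i + t) (j + t) * d j`
with `d i = wrapSign i t * wrapSign (σ (i + t)) s`.
-/

open Matrix

/-- `Y = D Pᵀ X P D` for some permutation matrix `P` and diagonal `±1` matrix `D`. -/
def SwitchingEquiv {n : ℕ} (X Y : Matrix (Fin n) (Fin n) ℤ) : Prop :=
  ∃ (π : Equiv.Perm (Fin n)) (d : Fin n → ℤ), (∀ i, d i = 1 ∨ d i = -1) ∧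
    Y = Matrix.diagonal d * (π.permMatrix ℤ)ᵀ * X * π.permMatrix ℤ * Matrix.diagonal d

theorem switchingEquiv_of_apply_eq {n : ℕ} {X Y : Matrix (Fin n) (Fin n) ℤ}
    (π : Equiv.Perm (Fin n)) (d : Fin n → ℤ) (hd : ∀ i, d i = 1 ∨ d i = -1)
    (h : ∀ i j, Y i j = d i * X (π i) (π j) * d j) : SwitchingEquiv X Y := by
  refine ⟨π.symm, d, hd, ?_⟩
  ext i j
  rw [transpose_permMatrix, Equiv.Perm.permMatrix, Equiv.Perm.permMatrix,
    Matrix.mul_assoc (diagonal d), PEquiv.toMatrix_toPEquiv_mul,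
    Matrix.mul_assoc (diagonal d), PEquiv.mul_toMatrix_toPEquiv]
  simp [h]

def wrapSign {n : ℕ} (a c : Fin n) : ℤ := if n ≤ (a : ℕ) + c then -1 else 1

theorem isUnit_wrapSign {n : ℕ} (a c : Fin n) : IsUnit (wrapSign a c) := by
  unfold wrapSign
  split_ifs <;> simp

theorem sign_val_add_sub_val_add {n : ℕ} (a b c : Fin n) :
    ((((a + c : Fin n) : ℕ) : ℤ) - ((b + c : Fin n) : ℕ)).sign
      = wrapSign a c * wrapSign b c * (((a : ℕ) : ℤ) - (b : ℕ)).sign := by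
  have := a.isLt
  have := b.isLt
  unfold wrapSign
  rw [Fin.val_add_eq_ite, Fin.val_add_eq_ite]
  split_ifs with ha hb hb <;> push_cast [Nat.cast_sub, *]
  · ring_nf
  · rw [Int.sign_eq_neg_one_of_neg (by omega), Int.sign_eq_one_of_pos (by omega)]
    rfl
  · rw [Int.sign_eq_one_of_pos (by omega), Int.sign_eq_neg_one_of_neg (by omega)]
    rfl
  · ring_nf

theorem sign_val_sub_val_eq_wrapSign_mul {n : ℕ} (a b c : Fin n) :
    (((a : ℕ) : ℤ) - (b : ℕ)).sign
      = wrapSign a c * wrapSign b c *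
        ((((a + c : Fin n) : ℕ) : ℤ) - ((b + c : Fin n) : ℕ)).sign := by
  rw [sign_val_add_sub_val_add, ← mul_assoc,
    Int.isUnit_mul_self ((isUnit_wrapSign a c).mul (isUnit_wrapSign b c)), one_mul]

/-- Circular moves are compatible with switching: if `μ(i) = s + σ(i + t)` on `ℤ/nℤ`
(identified with `{0,…,n−1}` with its usual order), then the linking matrices of `σ`
and `μ` are switching-equivalent. -/
theorem circular_move_switching {n : ℕ} [NeZero n] (σ : Equiv.Perm (Fin n))
    (s t : Fin n)
    (μ : Equiv.Perm (Fin n)) (hμ : ∀ i, μ i = s + σ (i + t))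
    (X Y : Matrix (Fin n) (Fin n) ℤ)
    (hX : X = Matrix.of fun i j : Fin n =>
      Int.sign ((((i : ℕ) : ℤ) - ((j : ℕ) : ℤ)) *
        ((((σ i : Fin n) : ℕ) : ℤ) - (((σ j : Fin n) : ℕ) : ℤ))))
    (hY : Y = Matrix.of fun i j : Fin n =>
      Int.sign ((((i : ℕ) : ℤ) - ((j : ℕ) : ℤ)) *
        ((((μ i : Fin n) : ℕ) : ℤ) - (((μ j : Fin n) : ℕ) : ℤ)))) :
    SwitchingEquiv X Y := by
  subst hX hY
  refine switchingEquiv_of_apply_eq (Equiv.addRight t)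
    (fun i => wrapSign i t * wrapSign (σ (i + t)) s)
    (fun i => Int.isUnit_iff.mp ((isUnit_wrapSign _ _).mul (isUnit_wrapSign _ _)))
    fun i j => ?_
  rw [of_apply, of_apply, Equiv.coe_addRight, hμ, hμ, add_comm s, add_comm s, Int.sign_mul,
    Int.sign_mul, sign_val_sub_val_eq_wrapSign_mul i j t,
    sign_val_add_sub_val_add (σ (i + t)) (σ (j + t)) s]
  ring
end

section
/- A vertical reflection of a block preserves the switching class of the linking matrix: if σ is a permutation of {1,…,n} with σ([1,k]) = [1,k], and μ is defined by μ(i) = k+1−σ(k+1−i) for i ≤ k and μ(i) = σ(i) for i > k, then the linking matrices of σ and μ (given by x_{i,j} = sign((i−j)(σ(i)−σ(j)))) are switching-equivalent. -/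
/-!
Let `ρ` reverse the block `{0, …, k-1}` and fix the other indices. Since `σ` preserves the block,
`μ = ρ σ ρ`, and the linking matrix of `μ` is that of `σ` with rows and columns permuted by `ρ`
(no sign changes needed): comparing `sign ((i - j) (ρσρ i - ρσρ j))` with
`sign ((ρ i - ρ j) (σρ i - σρ j))`, applying `ρ` flips the sign of a difference exactly when both
indices lie in the block, and `σ` preserves that condition.
-/

open Matrix

open Equiv

theorem SwitchingEquiv.submatrix {n : ℕ} (X : Matrix (Fin n) (Fin n) ℤ) (π : Perm (Fin n)) :
    SwitchingEquiv X (X.submatrix π π) := by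
  refine ⟨π⁻¹, fun _ => 1, fun _ => Or.inl rfl, ?_⟩
  rw [diagonal_one, Matrix.mul_one, Matrix.one_mul, transpose_permMatrix, inv_inv,
    Perm.permMatrix, Perm.permMatrix, PEquiv.toMatrix_toPEquiv_mul, PEquiv.mul_toMatrix_toPEquiv]
  rfl

def linkingMatrix {n : ℕ} (τ : Perm (Fin n)) : Matrix (Fin n) (Fin n) ℤ :=
  of fun i j => Int.sign ((((i : ℕ) : ℤ) - ((j : ℕ) : ℤ)) *
    ((((τ i : Fin n) : ℕ) : ℤ) - (((τ j : Fin n) : ℕ) : ℤ)))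

section PrefixRev

variable {n k : ℕ}

def prefixRev (hk : k ≤ n) : Perm (Fin n) :=
  Function.Involutive.toPerm (fun i => if (i : ℕ) < k then ⟨k - 1 - i, by omega⟩ else i) <| by
    intro i
    by_cases hi : (i : ℕ) < k
    · ext; simp only [hi, ↓reduceIte, show k - 1 - (i : ℕ) < k by omega]; omega
    · simp [hi]

variable (hk : k ≤ n) {i j : Fin n}

theorem prefixRev_apply :
    prefixRev hk i = if (i : ℕ) < k then ⟨k - 1 - i, by omega⟩ else i :=
  rfl

theorem prefixRev_val_of_lt (hi : (i : ℕ) < k) : (prefixRev hk i : ℕ) = k - 1 - i := by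
  rw [prefixRev_apply, if_pos hi]

theorem prefixRev_of_le (hi : k ≤ (i : ℕ)) : prefixRev hk i = i := by
  rw [prefixRev_apply, if_neg (not_lt.mpr hi)]

theorem prefixRev_lt_iff : (prefixRev hk i : ℕ) < k ↔ (i : ℕ) < k := by
  by_cases hi : (i : ℕ) < k
  · simp only [prefixRev_val_of_lt hk hi, hi, iff_true]; omega
  · rw [prefixRev_of_le hk (not_lt.mp hi)]

def blockSign (k : ℕ) (i j : Fin n) : ℤ := if (i : ℕ) < k ∧ (j : ℕ) < k then -1 else 1

theorem blockSign_apply_of_lt_iff (τ : Perm (Fin n)) (hτ : ∀ i, (τ i : ℕ) < k ↔ (i : ℕ) < k) :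
    blockSign k (τ i) (τ j) = blockSign k i j := by
  simp only [blockSign, hτ]

theorem sign_sub_prefixRev :
    Int.sign (((prefixRev hk i : ℕ) : ℤ) - (prefixRev hk j : ℕ)) =
      blockSign k i j * Int.sign (((i : ℕ) : ℤ) - (j : ℕ)) := by
  by_cases hi : (i : ℕ) < k <;> by_cases hj : (j : ℕ) < k
  · rw [prefixRev_val_of_lt hk hi, prefixRev_val_of_lt hk hj, blockSign, if_pos ⟨hi, hj⟩,
      neg_one_mul, ← Int.sign_neg]
    congr 1; omega
  · rw [prefixRev_val_of_lt hk hi, prefixRev_of_le hk (not_lt.mp hj), blockSign,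
      if_neg (by omega), one_mul, Int.sign_eq_neg_one_of_neg (by omega),
      Int.sign_eq_neg_one_of_neg (by omega)]
  · rw [prefixRev_of_le hk (not_lt.mp hi), prefixRev_val_of_lt hk hj, blockSign,
      if_neg (by omega), one_mul, Int.sign_eq_one_of_pos (by omega),
      Int.sign_eq_one_of_pos (by omega)]
  · rw [prefixRev_of_le hk (not_lt.mp hi), prefixRev_of_le hk (not_lt.mp hj), blockSign,
      if_neg (by omega), one_mul]

theorem linkingMatrix_prefixRev_conj (τ : Perm (Fin n)) (hτ : ∀ i, (τ i : ℕ) < k ↔ (i : ℕ) < k) :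
    linkingMatrix (prefixRev hk * τ * prefixRev hk) =
      (linkingMatrix τ).submatrix (prefixRev hk) (prefixRev hk) := by
  ext i j
  simp only [linkingMatrix, of_apply, submatrix_apply, Perm.mul_apply, Int.sign_mul]
  rw [sign_sub_prefixRev hk, sign_sub_prefixRev hk, blockSign_apply_of_lt_iff τ hτ,
    blockSign_apply_of_lt_iff _ fun _ => prefixRev_lt_iff hk]
  ring

theorem eq_prefixRev_mul_mul_prefixRev {σ μ : Perm (Fin n)}
    (hσ : ∀ i, (σ i : ℕ) < k ↔ (i : ℕ) < k)
    (hμ₁ : ∀ i j : Fin n, (i : ℕ) + (j : ℕ) + 1 = k → (μ i : ℕ) + (σ j : ℕ) + 1 = k)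
    (hμ₂ : ∀ i : Fin n, k ≤ (i : ℕ) → μ i = σ i) :
    μ = prefixRev hk * σ * prefixRev hk := by
  ext i
  by_cases hi : (i : ℕ) < k
  · have hμi := hμ₁ i (prefixRev hk i) (by rw [prefixRev_val_of_lt hk hi]; omega)
    have hσρi := (hσ _).mpr ((prefixRev_lt_iff hk).mpr hi)
    rw [Perm.mul_apply, Perm.mul_apply, prefixRev_val_of_lt hk hσρi]
    omega
  · have hσi : k ≤ (σ i : ℕ) := not_lt.mp ((hσ i).not.mpr hi)
    rw [not_lt] at hi
    rw [Perm.mul_apply, Perm.mul_apply, prefixRev_of_le hk hi, prefixRev_of_le hk hσi, hμ₂ i hi]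

end PrefixRev

/-- A vertical reflection of a block preserves the switching class of the linking
matrix: if `σ` maps the initial block (the first `k` indices) onto itself, and `μ`
reverses `σ` on the block (`μ(i) = k+1−σ(k+1−i)` in `1`-based indexing, i.e.
`μ(i) + σ(j) + 1 = k` whenever `i + j + 1 = k` in `0`-based indexing) and agrees
with `σ` outside the block, then the linking matrices of `σ` and `μ` are
switching-equivalent. -/
theorem vertical_reflection_switching {n k : ℕ} (hk : k ≤ n)
    (σ μ : Equiv.Perm (Fin n))
    (hσ : ∀ i : Fin n, (i : ℕ) < k → ((σ i : Fin n) : ℕ) < k)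
    (hμ₁ : ∀ i j : Fin n, (i : ℕ) + (j : ℕ) + 1 = k →
      ((μ i : Fin n) : ℕ) + ((σ j : Fin n) : ℕ) + 1 = k)
    (hμ₂ : ∀ i : Fin n, k ≤ (i : ℕ) → μ i = σ i)
    (X Y : Matrix (Fin n) (Fin n) ℤ)
    (hX : X = Matrix.of fun i j : Fin n =>
      Int.sign ((((i : ℕ) : ℤ) - ((j : ℕ) : ℤ)) *
        ((((σ i : Fin n) : ℕ) : ℤ) - (((σ j : Fin n) : ℕ) : ℤ))))
    (hY : Y = Matrix.of fun i j : Fin n =>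
      Int.sign ((((i : ℕ) : ℤ) - ((j : ℕ) : ℤ)) *
        ((((μ i : Fin n) : ℕ) : ℤ) - (((μ j : Fin n) : ℕ) : ℤ)))) :
    SwitchingEquiv X Y := by
  have hσ_iff (i : Fin n) : (σ i : ℕ) < k ↔ (i : ℕ) < k :=
    ⟨fun h => by simpa using σ.perm_symm_on_of_perm_on_finite (p := fun x => (x : ℕ) < k) hσ h,
      hσ i⟩
  have hμ := eq_prefixRev_mul_mul_prefixRev hk hσ_iff hμ₁ hμ₂
  have hY' : Y = X.submatrix (prefixRev hk) (prefixRev hk) := by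
    rw [hX, hY, ← linkingMatrix, ← linkingMatrix, hμ, linkingMatrix_prefixRev_conj hk σ hσ_iff]
  exact hY' ▸ SwitchingEquiv.submatrix X _
end

section
/- A horizontal reflection of a block preserves the switching class of the linking matrix: if σ is a permutation of {1,…,n} with σ([1,k]) = [1,k] for some 1 < k ≤ n, and μ(i) = σ⁻¹(i) for i ≤ k, μ(i) = σ(i) for i > k, then the linking matrices x_{i,j} = sign((i−j)(σ(i)−σ(j))) and y_{i,j} = sign((i−j)(μ(i)−μ(j))) are switching-equivalent. -/
open Matrix

/-!
Let `ρ` be `σ⁻¹` on the block `[0, k)` and the identity outside it. Relabelling the indices of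
the linking matrix of `σ` by `ρ` (a switching with `D = 1`) gives the linking matrix of `μ`:
inside the block, `x_{σ⁻¹ i, σ⁻¹ j} = sign((σ⁻¹ i - σ⁻¹ j)(i - j))`, outside nothing changes,
and every entry linking the block to its complement is `1` for both matrices, because `σ`, `μ`
and `ρ` all preserve the block and every index of the block precedes every index outside it.
-/

theorem switchingEquiv_submatrix {n : ℕ} (X : Matrix (Fin n) (Fin n) ℤ)
    (ρ : Equiv.Perm (Fin n)) : SwitchingEquiv X (X.submatrix ρ ρ) := by
  refine ⟨ρ⁻¹, fun _ => 1, fun _ => Or.inl rfl, ?_⟩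
  rw [Matrix.diagonal_one, Matrix.one_mul, Matrix.mul_one, transpose_permMatrix, inv_inv,
    PEquiv.toMatrix_toPEquiv_mul, PEquiv.mul_toMatrix_toPEquiv, Matrix.submatrix_submatrix]
  rfl

namespace Equiv.Perm

variable {n : ℕ}

def linkingMatrix (τ : Perm (Fin n)) : Matrix (Fin n) (Fin n) ℤ :=
  Matrix.of fun i j : Fin n =>
    Int.sign ((((i : ℕ) : ℤ) - ((j : ℕ) : ℤ)) *
      ((((τ i : Fin n) : ℕ) : ℤ) - (((τ j : Fin n) : ℕ) : ℤ)))

theorem linkingMatrix_apply_eq_one_of_separated {τ : Perm (Fin n)} {k : ℕ} {i j : Fin n}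
    (hi : ((τ i : ℕ) < k ↔ (i : ℕ) < k)) (hj : ((τ j : ℕ) < k ↔ (j : ℕ) < k))
    (hij : ¬((i : ℕ) < k ↔ (j : ℕ) < k)) : linkingMatrix τ i j = 1 := by
  refine Int.sign_eq_one_of_pos ?_
  rcases lt_or_ge (i : ℕ) k with h | h
  · exact mul_pos_of_neg_of_neg (by omega) (by omega)
  · exact mul_pos (by omega) (by omega)

theorem apply_lt_iff_of_forall_lt {σ : Perm (Fin n)} {k : ℕ}
    (hσ : ∀ i : Fin n, (i : ℕ) < k → ((σ i : Fin n) : ℕ) < k) (i : Fin n) :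
    ((σ i : Fin n) : ℕ) < k ↔ (i : ℕ) < k := by
  refine ⟨fun h => ?_, hσ i⟩
  simpa using perm_symm_on_of_perm_on_finite hσ h

theorem exists_linkingMatrix_eq_submatrix_of_reflection {k : ℕ} {σ μ : Perm (Fin n)}
    (hσ : ∀ i : Fin n, (i : ℕ) < k → ((σ i : Fin n) : ℕ) < k)
    (hμ₁ : ∀ i : Fin n, (i : ℕ) < k → μ i = σ⁻¹ i)
    (hμ₂ : ∀ i : Fin n, k ≤ (i : ℕ) → μ i = σ i) :
    ∃ ρ : Perm (Fin n), linkingMatrix μ = (linkingMatrix σ).submatrix ρ ρ := by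
  have hσinv : ∀ i : Fin n, (i : ℕ) < k → ((σ⁻¹ i : Fin n) : ℕ) < k :=
    fun i hi => perm_symm_on_of_perm_on_finite hσ hi
  set ρ := ofSubtype (subtypePermOfFintype σ⁻¹ hσinv)
  have hρ_in {i : Fin n} (hi : (i : ℕ) < k) : ρ i = σ⁻¹ i :=
    ofSubtype_apply_of_mem (a := i) _ hi
  have hρ_out {i : Fin n} (hi : ¬(i : ℕ) < k) : ρ i = i :=
    ofSubtype_apply_of_not_mem (a := i) _ hi
  have hμ : ∀ i : Fin n, ((μ i : Fin n) : ℕ) < k ↔ (i : ℕ) < k := fun i => by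
    rcases lt_or_ge (i : ℕ) k with hi | hi
    · simp only [hμ₁ i hi, hσinv i hi, hi]
    · rw [hμ₂ i hi, apply_lt_iff_of_forall_lt hσ]
  refine ⟨ρ, Matrix.ext fun i j => ?_⟩
  by_cases hij : (i : ℕ) < k ↔ (j : ℕ) < k
  · rcases lt_or_ge (i : ℕ) k with hi | hi
    · have hj := hij.mp hi
      simp only [linkingMatrix, submatrix_apply, of_apply, hρ_in hi, hρ_in hj, hμ₁ i hi,
        hμ₁ j hj, coe_inv, Equiv.apply_symm_apply, mul_comm]
    · have hj : ¬(j : ℕ) < k := by omega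
      simp only [linkingMatrix, submatrix_apply, of_apply, hρ_out (not_lt.mpr hi), hρ_out hj,
        hμ₂ i hi, hμ₂ j (not_lt.mp hj)]
  · have hρ : ∀ i : Fin n, ((ρ i : Fin n) : ℕ) < k ↔ (i : ℕ) < k :=
      ofSubtype_apply_mem_iff_mem (p := fun x : Fin n => (x : ℕ) < k) _
    rw [submatrix_apply, linkingMatrix_apply_eq_one_of_separated (hμ i) (hμ j) hij,
      linkingMatrix_apply_eq_one_of_separated (apply_lt_iff_of_forall_lt hσ _)
        (apply_lt_iff_of_forall_lt hσ _) (by rwa [hρ, hρ])]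

end Equiv.Perm

theorem horizontal_reflection_switching_general {n k : ℕ}
    (σ μ : Equiv.Perm (Fin n))
    (hσ : ∀ i : Fin n, (i : ℕ) < k → ((σ i : Fin n) : ℕ) < k)
    (hμ₁ : ∀ i : Fin n, (i : ℕ) < k → μ i = σ⁻¹ i)
    (hμ₂ : ∀ i : Fin n, k ≤ (i : ℕ) → μ i = σ i)
    (X Y : Matrix (Fin n) (Fin n) ℤ)
    (hX : X = Matrix.of fun i j : Fin n =>
      Int.sign ((((i : ℕ) : ℤ) - ((j : ℕ) : ℤ)) *
        ((((σ i : Fin n) : ℕ) : ℤ) - (((σ j : Fin n) : ℕ) : ℤ))))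
    (hY : Y = Matrix.of fun i j : Fin n =>
      Int.sign ((((i : ℕ) : ℤ) - ((j : ℕ) : ℤ)) *
        ((((μ i : Fin n) : ℕ) : ℤ) - (((μ j : Fin n) : ℕ) : ℤ)))) :
    SwitchingEquiv X Y := by
  obtain ⟨ρ, hρ⟩ := Equiv.Perm.exists_linkingMatrix_eq_submatrix_of_reflection hσ hμ₁ hμ₂
  change X = σ.linkingMatrix at hX
  change Y = μ.linkingMatrix at hY
  rw [hX, hY, hρ]
  exact switchingEquiv_submatrix _ ρ

/-- A horizontal reflection of a block preserves the switching class of the linking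
matrix: if `σ` maps the initial block (the first `k` indices, `1 < k ≤ n`) onto
itself, and `μ` equals `σ⁻¹` on the block and `σ` outside of it, then the linking
matrices of `σ` and `μ` are switching-equivalent. -/
theorem horizontal_reflection_switching {n k : ℕ} (hk₁ : 1 < k) (hk₂ : k ≤ n)
    (σ μ : Equiv.Perm (Fin n))
    (hσ : ∀ i : Fin n, (i : ℕ) < k → ((σ i : Fin n) : ℕ) < k)
    (hμ₁ : ∀ i : Fin n, (i : ℕ) < k → μ i = σ⁻¹ i)
    (hμ₂ : ∀ i : Fin n, k ≤ (i : ℕ) → μ i = σ i)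
    (X Y : Matrix (Fin n) (Fin n) ℤ)
    (hX : X = Matrix.of fun i j : Fin n =>
      Int.sign ((((i : ℕ) : ℤ) - ((j : ℕ) : ℤ)) *
        ((((σ i : Fin n) : ℕ) : ℤ) - (((σ j : Fin n) : ℕ) : ℤ))))
    (hY : Y = Matrix.of fun i j : Fin n =>
      Int.sign ((((i : ℕ) : ℤ) - ((j : ℕ) : ℤ)) *
        ((((μ i : Fin n) : ℕ) : ℤ) - (((μ j : Fin n) : ℕ) : ℤ)))) :
    SwitchingEquiv X Y :=
  horizontal_reflection_switching_general σ μ hσ hμ₁ hμ₂ X Y hX hY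
end
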